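/- arXiv:2605.29624 — 2 statements merged into one kernel-verified Lean document; each statement's English description precedes it below -/
import Mathlib

section
/- Let p > 13 be a prime with p ≡ 4 (mod 5), and let G(λ) := G^{((3p-7)/10)}(3/5, 7/10, 11/10 | λ) over F_p. Then G(0) = 1 and G(1) ≠ 0 in F_p. -/
/-- The Pochhammer symbol `(x;ℓ) = x(x+1)⋯(x+ℓ-1)` in a field `K`. -/
noncomputable def poch {K : Type*} [Field K] (x : K) (ℓ : ℕ) : K :=
  ∏ i ∈ Finset.range ℓ, (x + (i : K))

/-- The truncated Gaussian hypergeometric series `G^(d)(a,b,c | z)` as a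
polynomial in `z`: `Σ_{ℓ=0}^d ((a;ℓ)(b;ℓ))/((c;ℓ)(1;ℓ)) z^ℓ`. -/
noncomputable def Gpoly {K : Type*} [Field K] (d : ℕ) (a b c : K) : Polynomial K :=
  ∑ ℓ ∈ Finset.range (d + 1),
    Polynomial.C (poch a ℓ * poch b ℓ / (poch c ℓ * poch 1 ℓ)) * Polynomial.X ^ ℓ

section aux

variable {K : Type*} [Field K]

lemma poch_zero (x : K) : poch x 0 = 1 := by simp [poch]

lemma poch_succ (x : K) (n : ℕ) : poch x (n + 1) = poch x n * (x + n) := by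
  simp [poch, Finset.prod_range_succ]

lemma poch_succ' (x : K) (n : ℕ) : poch x (n + 1) = x * poch (x + 1) n := by
  rw [poch, Finset.prod_range_succ']
  simp only [Nat.cast_zero, add_zero, mul_comm, poch]
  congr 1
  apply Finset.prod_congr rfl
  intro i _
  push_cast
  ring

lemma poch_add (x : K) (m n : ℕ) : poch x (m + n) = poch x m * poch (x + m) n := by
  induction n with
  | zero => simp [poch_zero]
  | succ n ih =>
    rw [← add_assoc, poch_succ, ih, poch_succ]
    push_cast
    ring

lemma poch_one_eq_factorial (n : ℕ) : poch (1 : K) n = (n.factorial : K) := by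
  induction n with
  | zero => simp [poch_zero]
  | succ n ih =>
    rw [poch_succ, ih, Nat.factorial_succ]
    push_cast
    ring

/-- `poch (-d) ℓ = (-1)^ℓ * descFactorial d ℓ` for `ℓ ≤ d`. -/
lemma poch_neg_nat (d ℓ : ℕ) (h : ℓ ≤ d) :
    poch (-(d : K)) ℓ = (-1) ^ ℓ * (d.descFactorial ℓ : K) := by
  induction ℓ with
  | zero => simp [poch_zero]
  | succ ℓ ih =>
    have hℓ : ℓ ≤ d := Nat.le_of_succ_le h
    rw [poch_succ, ih hℓ, Nat.descFactorial_succ]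
    have hcast : ((d - ℓ : ℕ) : K) = (d : K) - (ℓ : K) := by
      push_cast [Nat.cast_sub hℓ]; ring
    push_cast [hcast]
    ring

/-- Key Chu–Vandermonde identity (polynomial form):
`∑_{ℓ=0}^d (-1)^ℓ C(d,ℓ) (x;ℓ) (x+z+ℓ; d-ℓ) = (z;d)`. -/
lemma chu_vandermonde (d : ℕ) (x : K) : ∀ z : K,
    ∑ ℓ ∈ Finset.range (d + 1),
      (-1) ^ ℓ * (d.choose ℓ : K) * poch x ℓ * poch (x + z + ℓ) (d - ℓ) = poch z d := by
  induction d with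
  | zero => intro z; simp [poch_zero]
  | succ d ih =>
    intro z
    -- abbreviations (as plain functions)
    rw [Finset.sum_range_succ' (fun ℓ => (-1 : K) ^ ℓ * ((d + 1).choose ℓ : K) * poch x ℓ
          * poch (x + z + ℓ) (d + 1 - ℓ)) (d + 1)]
    have h1 : ∀ i ∈ Finset.range (d + 1),
        (-1 : K) ^ (i + 1) * ((d + 1).choose (i + 1) : K) * poch x (i + 1)
            * poch (x + z + ((i + 1 : ℕ) : K)) (d + 1 - (i + 1))
        = (-1 : K) ^ (i + 1) * (d.choose (i + 1) : K) * poch x (i + 1)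
            * poch (x + z + ((i + 1 : ℕ) : K)) (d + 1 - (i + 1))
          + (-1 : K) ^ (i + 1) * (d.choose i : K) * poch x (i + 1)
            * poch (x + z + ((i + 1 : ℕ) : K)) (d - i) := by
      intro i hi
      have hdi : d + 1 - (i + 1) = d - i := by omega
      rw [hdi, Nat.choose_succ_succ']
      push_cast
      ring
    rw [Finset.sum_congr rfl h1, Finset.sum_add_distrib]
    have e1 := Finset.sum_range_succ' (fun ℓ => (-1 : K) ^ ℓ * (d.choose ℓ : K) * poch x ℓ
        * poch (x + z + ℓ) (d + 1 - ℓ)) (d + 1)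
    have e2 := Finset.sum_range_succ (fun ℓ => (-1 : K) ^ ℓ * (d.choose ℓ : K) * poch x ℓ
        * poch (x + z + ℓ) (d + 1 - ℓ)) (d + 1)
    have e3 : (-1 : K) ^ (d + 1) * (d.choose (d + 1) : K) * poch x (d + 1)
        * poch (x + z + ((d + 1 : ℕ) : K)) (d + 1 - (d + 1)) = 0 := by
      simp [Nat.choose_succ_self]
    have e4 : (-1 : K) ^ 0 * (((d + 1).choose 0 : ℕ) : K) * poch x 0
        * poch (x + z + ((0 : ℕ) : K)) (d + 1 - 0)
        = (-1 : K) ^ 0 * ((d.choose 0 : ℕ) : K) * poch x 0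
        * poch (x + z + ((0 : ℕ) : K)) (d + 1 - 0) := by
      simp
    have hmain : ∑ ℓ ∈ Finset.range (d + 1),
          ((-1 : K) ^ ℓ * (d.choose ℓ : K) * poch x ℓ * poch (x + z + ℓ) (d + 1 - ℓ))
        + ∑ ℓ ∈ Finset.range (d + 1),
          ((-1 : K) ^ (ℓ + 1) * (d.choose ℓ : K) * poch x (ℓ + 1)
            * poch (x + z + ((ℓ + 1 : ℕ) : K)) (d - ℓ))
        = poch z (d + 1) := by
      rw [← Finset.sum_add_distrib]
      have hterm : ∀ ℓ ∈ Finset.range (d + 1),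
          ((-1 : K) ^ ℓ * (d.choose ℓ : K) * poch x ℓ * poch (x + z + ℓ) (d + 1 - ℓ)
           + (-1 : K) ^ (ℓ + 1) * (d.choose ℓ : K) * poch x (ℓ + 1)
             * poch (x + z + ((ℓ + 1 : ℕ) : K)) (d - ℓ))
          = z * ((-1) ^ ℓ * (d.choose ℓ : K) * poch x ℓ * poch (x + (z + 1) + ℓ) (d - ℓ)) := by
        intro ℓ hℓ
        have hle : ℓ ≤ d := by
          simp only [Finset.mem_range] at hℓ; omega
        have hd1 : d + 1 - ℓ = (d - ℓ) + 1 := by omega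
        rw [hd1, poch_succ' (x + z + ℓ) (d - ℓ), poch_succ x ℓ]
        have e5 : x + z + (ℓ : K) + 1 = x + (z + 1) + ℓ := by ring
        have e6 : x + z + ((ℓ + 1 : ℕ) : K) = x + (z + 1) + ℓ := by push_cast; ring
        rw [e5, e6]
        ring
      rw [Finset.sum_congr rfl hterm, ← Finset.mul_sum, ih (z + 1), ← poch_succ']
    linear_combination e2 - e1 + e3 + e4 + hmain

variable {p : ℕ} [Fact p.Prime]

lemma poch_cast_ne_zero (m n : ℕ) (hm : 0 < m) (h : m + n ≤ p) :
    poch ((m : ℕ) : ZMod p) n ≠ 0 := by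
  rw [poch, Finset.prod_ne_zero_iff]
  intro i hi
  simp only [Finset.mem_range] at hi
  have : ((m : ZMod p) + (i : ZMod p)) = ((m + i : ℕ) : ZMod p) := by push_cast; ring
  rw [this]
  intro h0
  rw [ZMod.natCast_eq_zero_iff] at h0
  have h1 : m + i < p := by omega
  have h2 : 0 < m + i := by omega
  exact absurd (Nat.le_of_dvd h2 h0) (by omega)

end aux

theorem Gpoly_eval_zero_eq_one_and_eval_one_ne_zero
    (p : ℕ) [Fact p.Prime] (hp13 : 13 < p) (hp5 : p % 5 = 4) :
    (Gpoly ((3 * p - 7) / 10) ((3 : ZMod p) / 5) ((7 : ZMod p) / 10)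
        ((11 : ZMod p) / 10)).eval 0 = 1 ∧
      (Gpoly ((3 * p - 7) / 10) ((3 : ZMod p) / 5) ((7 : ZMod p) / 10)
        ((11 : ZMod p) / 10)).eval 1 ≠ 0 := by
  have hprime := (Fact.out : p.Prime)
  have hodd : p % 2 = 1 := Nat.odd_iff.mp (hprime.odd_of_ne_two (by omega))
  set k := (p - 9) / 10 with hk_def
  have hp : p = 10 * k + 9 := by omega
  have hd : (3 * p - 7) / 10 = 3 * k + 2 := by omega
  set d := (3 * p - 7) / 10 with hd_def
  have hcast_ne : ∀ m : ℕ, 0 < m → m < p → ((m : ℕ) : ZMod p) ≠ 0 := by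
    intro m h1 h2 h0
    rw [ZMod.natCast_eq_zero_iff] at h0
    exact absurd (Nat.le_of_dvd h1 h0) (by omega)
  have h5' : (5 : ZMod p) ≠ 0 := by
    have := hcast_ne 5 (by norm_num) (by omega); exact_mod_cast this
  have h10' : (10 : ZMod p) ≠ 0 := by
    have := hcast_ne 10 (by norm_num) (by omega); exact_mod_cast this
  have hpzero : ((p : ℕ) : ZMod p) = 0 := ZMod.natCast_self p
  have ha : (3 : ZMod p) / 5 = ((6 * k + 6 : ℕ) : ZMod p) := by
    rw [div_eq_iff h5']
    have h' : ((6 * k + 6) * 5 : ℕ) = 3 * p + 3 := by omega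
    have h2 := congrArg (Nat.cast (R := ZMod p)) h'
    push_cast [hpzero] at h2 ⊢
    linear_combination -h2
  have hc : (11 : ZMod p) / 10 = ((k + 2 : ℕ) : ZMod p) := by
    rw [div_eq_iff h10']
    have h' : ((k + 2) * 10 : ℕ) = p + 11 := by omega
    have h2 := congrArg (Nat.cast (R := ZMod p)) h'
    push_cast [hpzero] at h2 ⊢
    linear_combination -h2
  have hb : (7 : ZMod p) / 10 = -((d : ℕ) : ZMod p) := by
    rw [div_eq_iff h10']
    have h' : (d * 10 + 7 : ℕ) = 3 * p := by omega
    have h2 := congrArg (Nat.cast (R := ZMod p)) h'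
    push_cast [hpzero] at h2 ⊢
    linear_combination h2
  have hz : (11 : ZMod p) / 10 - (3 : ZMod p) / 5 = ((5 * k + 5 : ℕ) : ZMod p) := by
    rw [hc, ha, sub_eq_iff_eq_add]
    have h' : ((k + 2) + p : ℕ) = (5 * k + 5) + (6 * k + 6) := by omega
    have h2 := congrArg (Nat.cast (R := ZMod p)) h'
    push_cast [hpzero] at h2 ⊢
    linear_combination h2
  constructor
  · rw [Gpoly, Polynomial.eval_finset_sum]
    rw [Finset.sum_eq_single 0]
    · simp [poch_zero]
    · intro ℓ _ hℓ
      simp [zero_pow hℓ]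
    · intro h; exact absurd (Finset.mem_range.mpr (by omega)) h
  · rw [Gpoly, Polynomial.eval_finset_sum]
    simp only [Polynomial.eval_mul, Polynomial.eval_pow, Polynomial.eval_C, Polynomial.eval_X,
      one_pow, mul_one]
    have hcd : poch ((11 : ZMod p) / 10) d ≠ 0 := by
      rw [hc]
      exact poch_cast_ne_zero (k + 2) d (by omega) (by omega)
    have hzd : poch ((11 : ZMod p) / 10 - (3 : ZMod p) / 5) d ≠ 0 := by
      rw [hz]
      exact poch_cast_ne_zero (5 * k + 5) d (by omega) (by omega)
    have hsum : ∑ ℓ ∈ Finset.range (d + 1),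
        poch ((3 : ZMod p) / 5) ℓ * poch ((7 : ZMod p) / 10) ℓ
          / (poch ((11 : ZMod p) / 10) ℓ * poch 1 ℓ)
        = poch ((11 : ZMod p) / 10 - (3 : ZMod p) / 5) d / poch ((11 : ZMod p) / 10) d := by
      rw [eq_div_iff hcd, Finset.sum_mul,
        ← chu_vandermonde d ((3 : ZMod p) / 5) ((11 : ZMod p) / 10 - (3 : ZMod p) / 5)]
      apply Finset.sum_congr rfl
      intro ℓ hℓ
      have hle : ℓ ≤ d := by simp only [Finset.mem_range] at hℓ; omega
      have hbℓ : poch ((7 : ZMod p) / 10) ℓ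
          = (-1) ^ ℓ * ((ℓ.factorial * d.choose ℓ : ℕ) : ZMod p) := by
        rw [hb, poch_neg_nat d ℓ hle, Nat.descFactorial_eq_factorial_mul_choose]
      have h1ℓ : poch (1 : ZMod p) ℓ = (ℓ.factorial : ZMod p) := poch_one_eq_factorial ℓ
      have hfℓ : (ℓ.factorial : ZMod p) ≠ 0 := by
        intro h0
        rw [ZMod.natCast_eq_zero_iff] at h0
        have := (Nat.Prime.dvd_factorial hprime).mp h0
        omega
      have hcℓ : poch ((11 : ZMod p) / 10) ℓ ≠ 0 := by
        rw [hc]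
        exact poch_cast_ne_zero (k + 2) ℓ (by omega) (by omega)
      have hsplit : poch ((11 : ZMod p) / 10) d
          = poch ((11 : ZMod p) / 10) ℓ * poch ((11 : ZMod p) / 10 + ℓ) (d - ℓ) := by
        have : d = ℓ + (d - ℓ) := by omega
        rw [this, poch_add]
        congr 2
        omega
      have harg : (3 : ZMod p) / 5 + ((11 : ZMod p) / 10 - (3 : ZMod p) / 5) + (ℓ : ZMod p)
          = (11 : ZMod p) / 10 + (ℓ : ZMod p) := by ring
      rw [harg, hbℓ, h1ℓ, hsplit, div_mul_eq_mul_div, div_eq_iff (mul_ne_zero hcℓ hfℓ)]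
      push_cast
      ring
    rw [hsum]
    exact div_ne_zero hzd hcd
end

section
/- Let p ≡ 1 (mod 8) be a prime. Over F_p, the polynomials G^{((5p-5)/8)}(3/4, 5/8, 7/8 | λ) and (1-λ)^{(p-1)/2} · G^{((p-1)/8)}(1/4, 1/8, 7/8 | λ) are equal. -/
open Finset

namespace Nat

theorem choose_mul_choose_sub_comm (m j n : ℕ) :
    m.choose j * (m - j).choose n = m.choose n * (m - n).choose j := by
  have hj := choose_mul (n := m) (Nat.le_add_right j n)
  have hn := choose_mul (n := m) (Nat.le_add_left n j)
  rw [Nat.add_sub_cancel_left] at hj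
  rw [Nat.add_sub_cancel] at hn
  rw [← hj, ← hn, choose_symm_add]

theorem add_choose_eq_sum_range (m n k : ℕ) :
    (m + n).choose k = ∑ i ∈ range (k + 1), m.choose i * n.choose (k - i) := by
  rw [add_choose_eq, Finset.Nat.sum_antidiagonal_eq_sum_range_succ_mk]

theorem choose_mul_choose_add_sub_eq_sum (a b M ℓ : ℕ) :
    b.choose ℓ * (a + b + M - ℓ).choose (b + M) =
      ∑ i ∈ range (a + 1), (a + M).choose i * (b.choose (a - i) * (a - i).choose ℓ) := by
  rcases lt_or_ge b ℓ with hbℓ | hbℓ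
  · rw [choose_eq_zero_of_lt hbℓ, Nat.zero_mul]
    refine (sum_eq_zero fun i _ => ?_).symm
    rcases lt_or_ge (a - i) ℓ with h | h
    · rw [choose_eq_zero_of_lt h, Nat.mul_zero, Nat.mul_zero]
    · rw [choose_eq_zero_of_lt (by omega : b < a - i), Nat.zero_mul, Nat.mul_zero]
  rcases lt_or_ge a ℓ with haℓ | haℓ
  · rw [choose_eq_zero_of_lt (by omega : a + b + M - ℓ < b + M), Nat.mul_zero]
    refine (sum_eq_zero fun i _ => ?_).symm
    rw [choose_eq_zero_of_lt (by omega : a - i < ℓ), Nat.mul_zero, Nat.mul_zero]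
  have hvanish : ∀ i ∈ range (a + 1), i ∉ range (a - ℓ + 1) →
      (a + M).choose i * (b.choose (a - i) * (a - i).choose ℓ) = 0 := by
    intro i hia hi
    rw [mem_range] at hia hi
    rw [choose_eq_zero_of_lt (by omega : a - i < ℓ), Nat.mul_zero, Nat.mul_zero]
  rw [← sum_subset (range_subset_range.2 (by omega)) hvanish]
  calc b.choose ℓ * (a + b + M - ℓ).choose (b + M)
      = b.choose ℓ * ((a + M) + (b - ℓ)).choose (a - ℓ) := by
        rw [show a + b + M - ℓ = (a - ℓ) + (b + M) by omega, ← choose_symm_add,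
          show a - ℓ + (b + M) = a + M + (b - ℓ) by omega]
    _ = ∑ i ∈ range (a - ℓ + 1), b.choose ℓ * ((a + M).choose i * (b - ℓ).choose (a - ℓ - i)) := by
        rw [add_choose_eq_sum_range, mul_sum]
    _ = ∑ i ∈ range (a - ℓ + 1), (a + M).choose i * (b.choose (a - i) * (a - i).choose ℓ) := by
        refine sum_congr rfl fun i hi => ?_
        rw [mem_range] at hi
        rw [choose_mul (by omega : ℓ ≤ a - i), show a - i - ℓ = a - ℓ - i by omega]
        ring

theorem sum_antidiagonal_choose_mul_choose_mul_choose (a b M n : ℕ) :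
    ∑ x ∈ antidiagonal n, M.choose x.1 * (b.choose x.2 * (a + b + M - x.2).choose (b + M)) =
      (a + M).choose n * (a + b + M - n).choose a := by
  calc ∑ x ∈ antidiagonal n, M.choose x.1 * (b.choose x.2 * (a + b + M - x.2).choose (b + M))
      = ∑ x ∈ antidiagonal n, ∑ i ∈ range (a + 1),
          (a + M).choose i * b.choose (a - i) * (M.choose x.1 * (a - i).choose x.2) := by
        refine sum_congr rfl fun x _ => ?_
        rw [choose_mul_choose_add_sub_eq_sum, mul_sum]
        exact sum_congr rfl fun i _ => by ring
    _ = ∑ i ∈ range (a + 1), (a + M).choose i * b.choose (a - i) * (M + (a - i)).choose n := by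
        rw [sum_comm]
        exact sum_congr rfl fun i _ => by rw [← mul_sum, ← add_choose_eq]
    _ = ∑ i ∈ range (a + 1), (a + M).choose n * ((a + M - n).choose i * b.choose (a - i)) := by
        refine sum_congr rfl fun i hi => ?_
        rw [mem_range] at hi
        rw [show M + (a - i) = a + M - i by omega, mul_right_comm, choose_mul_choose_sub_comm]
        ring
    _ = (a + M).choose n * (a + b + M - n).choose a := by
        rw [← mul_sum, ← add_choose_eq_sum_range]
        rcases le_or_gt n (a + M) with h | h
        · rw [show a + M - n + b = a + b + M - n by omega]
        · rw [choose_eq_zero_of_lt h, Nat.zero_mul, Nat.zero_mul]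

end Nat

open Polynomial

section Field

variable {K : Type*} [Field K]

theorem div_eq_neg_mul_of_mul_eq_neg_one {d s : K} (h : d * s = -1) (x : K) :
    x / d = -(x * s) := by
  have hd : d ≠ 0 := by
    rintro rfl
    simp at h
  rw [div_eq_iff hd]
  linear_combination x * h

theorem poch_eq_ascPochhammer_eval (x : K) (ℓ : ℕ) : poch x ℓ = (ascPochhammer K ℓ).eval x := by
  induction ℓ with
  | zero => simp [poch]
  | succ n ih => rw [poch, prod_range_succ, ← poch, ih, ascPochhammer_succ_eval]

theorem poch_neg_natCast (A ℓ : ℕ) :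
    poch (-(A : K)) ℓ = (-1) ^ ℓ * (ℓ.factorial * A.choose ℓ : ℕ) := by
  rw [poch_eq_ascPochhammer_eval, ascPochhammer_eval_neg_eq_descPochhammer,
    descPochhammer_eval_eq_descFactorial, Nat.descFactorial_eq_factorial_mul_choose]

theorem poch_one (ℓ : ℕ) : poch (1 : K) ℓ = ℓ.factorial := by
  rw [poch_eq_ascPochhammer_eval]
  exact_mod_cast ascPochhammer_eval_one K ℓ

theorem coeff_Gpoly (d : ℕ) (a b c : K) (n : ℕ) :
    (Gpoly d a b c).coeff n =
      if n ≤ d then poch a n * poch b n / (poch c n * poch 1 n) else 0 := by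
  simp only [Gpoly, finsetSum_coeff, coeff_C_mul_X_pow, sum_ite_eq, mem_range, Nat.lt_succ_iff]

theorem coeff_one_sub_X_pow (M k : ℕ) :
    ((1 - X : K[X]) ^ M).coeff k = (-1) ^ k * M.choose k := by
  have hterm (m : ℕ) : (-X : K[X]) ^ m * 1 ^ (M - m) * (M.choose m : K[X]) =
      C ((-1 : K) ^ m * M.choose m) * X ^ m := by
    rw [neg_pow, one_pow, C_mul, C_pow, C_neg, C_1, ← C_eq_natCast]
    ring
  rw [sub_eq_add_neg, add_comm, add_pow, finsetSum_coeff]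
  simp only [hterm, coeff_C_mul_X_pow, sum_ite_eq, mem_range, Nat.lt_succ_iff]
  split_ifs with hk
  · rfl
  · rw [Nat.choose_eq_zero_of_lt (not_le.1 hk), Nat.cast_zero, mul_zero]

theorem cast_choose_ne_zero {C k : ℕ} (hk : k ≤ C) (hC : (C.factorial : K) ≠ 0) :
    (C.choose k : K) ≠ 0 :=
  ne_zero_of_dvd_ne_zero hC <| Nat.cast_dvd_cast <| Dvd.intro _ <| by
    rw [← mul_assoc, Nat.choose_mul_factorial_mul_factorial hk]

theorem coeff_Gpoly_neg_natCast {A B C : ℕ} (hBC : B ≤ C) (hC : (C.factorial : K) ≠ 0)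
    (n : ℕ) : (Gpoly B (-(A : K)) (-(B : K)) (-(C : K))).coeff n =
      (-1) ^ n * (A.choose n * B.choose n / C.choose n) := by
  rw [coeff_Gpoly]
  split_ifs with hn
  · have hfact : (n.factorial : K) ≠ 0 := ne_zero_of_dvd_ne_zero hC <|
      Nat.cast_dvd_cast <| Nat.factorial_dvd_factorial (hn.trans hBC)
    have hchoose := cast_choose_ne_zero (hn.trans hBC) hC
    rw [poch_neg_natCast, poch_neg_natCast, poch_neg_natCast, poch_one]
    push_cast
    field_simp
  · rw [Nat.choose_eq_zero_of_lt (not_le.1 hn)]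
    simp

theorem cast_choose_mul_choose_div_choose {u v w C : ℕ} (huv : u + v = C) (hw : w ≤ C)
    (hC : (C.factorial : K) ≠ 0) (ℓ : ℕ) :
    (w.choose ℓ * u.choose ℓ / C.choose ℓ : K) = w.choose ℓ * (C - ℓ).choose v / C.choose u := by
  rcases lt_or_ge C ℓ with hℓ | hℓ
  · rw [Nat.choose_eq_zero_of_lt (hw.trans_lt hℓ)]
    simp
  have key : C.choose ℓ * (C - ℓ).choose v = C.choose u * u.choose ℓ := by
    rw [Nat.choose_mul_choose_sub_comm, ← huv, Nat.add_sub_cancel, Nat.choose_symm_add]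
  rw [div_eq_div_iff (cast_choose_ne_zero hℓ hC) (cast_choose_ne_zero (by omega) hC)]
  have hkey := congrArg (Nat.cast : ℕ → K) key
  push_cast at hkey
  linear_combination (w.choose ℓ : K) * hkey.symm

theorem Gpoly_neg_natCast_euler_transform (a b M : ℕ) (hc : ((a + b + M).factorial : K) ≠ 0) :
    Gpoly (b + M) (-((a + M : ℕ) : K)) (-((b + M : ℕ) : K)) (-((a + b + M : ℕ) : K)) =
      (1 - X) ^ M * Gpoly b (-(a : K)) (-(b : K)) (-((a + b + M : ℕ) : K)) := by
  ext n
  rw [coeff_mul, coeff_Gpoly_neg_natCast (by omega) hc,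
    cast_choose_mul_choose_div_choose (u := b + M) (v := a) (by omega) (by omega) hc,
    Nat.choose_symm_of_eq_add (by omega : a + b + M = (b + M) + a)]
  have hterm : ∀ x ∈ antidiagonal n,
      ((1 - X : K[X]) ^ M).coeff x.1 *
          (Gpoly b (-(a : K)) (-(b : K)) (-((a + b + M : ℕ) : K))).coeff x.2 =
        (-1) ^ n * ((M.choose x.1 * (b.choose x.2 * (a + b + M - x.2).choose (b + M)) : ℕ) : K) /
          (a + b + M).choose a := by
    intro x hx
    rw [HasAntidiagonal.mem_antidiagonal] at hx
    rw [coeff_one_sub_X_pow, coeff_Gpoly_neg_natCast (by omega) hc, mul_comm (a.choose _ : K),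
      cast_choose_mul_choose_div_choose (u := a) (v := b + M) (by omega) (by omega) hc, ← hx,
      pow_add]
    push_cast
    ring
  rw [sum_congr rfl hterm, ← sum_div, ← mul_sum, ← Nat.cast_sum,
    Nat.sum_antidiagonal_choose_mul_choose_mul_choose]
  push_cast
  ring

end Field

theorem Gpoly_euler_transform_one_mod_eight
    (p : ℕ) [Fact p.Prime] (hp8 : p % 8 = 1) :
    Gpoly ((5 * p - 5) / 8) ((3 : ZMod p) / 4) ((5 : ZMod p) / 8) ((7 : ZMod p) / 8) =
      (1 - Polynomial.X) ^ ((p - 1) / 2) *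
        Gpoly ((p - 1) / 8) ((1 : ZMod p) / 4) ((1 : ZMod p) / 8)
          ((7 : ZMod p) / 8) := by
  obtain ⟨t, ht⟩ : ∃ t, p = 8 * t + 1 := ⟨p / 8, by omega⟩
  have h8 : (8 : ZMod p) * t = -1 := by
    have hp : ((8 * t + 1 : ℕ) : ZMod p) = 0 := (ZMod.natCast_eq_zero_iff _ _).2 ⟨1, by omega⟩
    push_cast at hp
    linear_combination hp
  have h4 : (4 : ZMod p) * (2 * t) = -1 := by linear_combination h8
  have hfact : ((2 * t + t + 4 * t).factorial : ZMod p) ≠ 0 := by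
    rw [Ne, ZMod.natCast_eq_zero_iff, Nat.Prime.dvd_factorial Fact.out]
    omega
  have euler := Gpoly_neg_natCast_euler_transform (2 * t) t (4 * t) hfact
  rw [show (5 * p - 5) / 8 = t + 4 * t by omega, show (p - 1) / 2 = 4 * t by omega,
    show (p - 1) / 8 = t by omega]
  simp only [div_eq_neg_mul_of_mul_eq_neg_one h4, div_eq_neg_mul_of_mul_eq_neg_one h8]
  push_cast at euler
  ring_nf at euler ⊢
  exact euler
end
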